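/- arXiv:2106.00578 — 8 statements merged into one kernel-verified Lean document; each statement's English description precedes it below -/
import Mathlib

section
/- Let W = W₁W₂ be an unbordered word of even length 2n over an arbitrary alphabet, where |W₁| = |W₂| = n. Then for every letter c, the word W₁cW₂ (of length 2n+1, obtained by inserting c in the middle of W) is unbordered. -/
/-- `B` is a border of the word `W`: a nonempty proper suffix of `W`
(proper meaning of length strictly less than `|W|`) that is also a prefix of `W`. -/
def IsBorder {α : Type*} (B W : List α) : Prop :=
  B ≠ [] ∧ B.length < W.length ∧ B <:+ W ∧ B <+: W

/-- A word is unbordered if it has no border. -/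
def Unbordered {α : Type*} (W : List α) : Prop :=
  ∀ B, ¬ IsBorder B W

/-!
A border longer than half the word overlaps itself, and the overlap is a shorter border; so a
bordered word has a border of length at most half its length. In `W₁cW₂` such a border has
length at most `n`, hence is a prefix of `W₁` and a suffix of `W₂`, i.e. a border of `W₁W₂`.
-/

namespace IsBorder

variable {α : Type*} {B C W : List α}

theorem trans (hBC : IsBorder B C) (hCW : IsBorder C W) : IsBorder B W :=
  ⟨hBC.1, hBC.2.1.trans hCW.2.1, hBC.2.2.1.trans hCW.2.2.1, hBC.2.2.2.trans hCW.2.2.2⟩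

theorem exists_shorter_of_lt_two_mul_length (hB : IsBorder B W)
    (hlong : W.length < 2 * B.length) : ∃ C, IsBorder C W ∧ C.length < B.length := by
  obtain ⟨hne, hlt, ⟨Y, hY⟩, ⟨X, hX⟩⟩ := hB
  have hYlen : Y.length = W.length - B.length := by
    rw [← hY, List.length_append]; omega
  have hself : B = B.drop Y.length ++ X := by
    have := congrArg (List.drop Y.length) (hY.trans hX.symm)
    rwa [List.drop_left, List.drop_append_of_le_length (by omega)] at this
  have hCB : IsBorder (B.drop Y.length) B := by
    refine ⟨?_, ?_, List.drop_suffix _ _, ⟨X, hself.symm⟩⟩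
    · rw [ne_eq, List.drop_eq_nil_iff]; omega
    · rw [List.length_drop]; omega
  exact ⟨_, hCB.trans ⟨hne, hlt, ⟨Y, hY⟩, ⟨X, hX⟩⟩, hCB.2.1⟩

theorem exists_two_mul_length_le (hB : IsBorder B W) :
    ∃ C, IsBorder C W ∧ 2 * C.length ≤ W.length := by
  induction hlen : B.length using Nat.strong_induction_on generalizing B with
  | _ k ih =>
    by_cases hshort : 2 * B.length ≤ W.length
    · exact ⟨B, hB, hshort⟩
    · obtain ⟨C, hC, hCB⟩ := hB.exists_shorter_of_lt_two_mul_length (by omega)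
      exact ih C.length (hlen ▸ hCB) hC rfl

theorem of_append_middle {W₁ M W₂ : List α} (hB : IsBorder B (W₁ ++ M ++ W₂))
    (hle₁ : B.length ≤ W₁.length) (hle₂ : B.length ≤ W₂.length) : IsBorder B (W₁ ++ W₂) := by
  obtain ⟨hne, -, hsuf, hpre⟩ := hB
  have hpos : 0 < B.length := List.length_pos_iff.mpr hne
  refine ⟨hne, ?_, ?_, ?_⟩
  · rw [List.length_append]; omega
  · exact (List.suffix_of_suffix_length_le hsuf (List.suffix_append _ _) hle₂).trans
      (List.suffix_append _ _)
  · rw [List.append_assoc] at hpre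
    exact (List.prefix_of_prefix_length_le hpre (List.prefix_append _ _) hle₁).trans
      (List.prefix_append _ _)

end IsBorder

/-- If `W = W₁W₂` is an unbordered word of even length `2n` with `|W₁| = |W₂| = n`, then
for every letter `c` the word `W₁cW₂` is unbordered. -/
theorem unbordered_insert_middle_even {α : Type*} (n : ℕ) (W₁ W₂ : List α)
    (h₁ : W₁.length = n) (h₂ : W₂.length = n)
    (hW : Unbordered (W₁ ++ W₂)) (c : α) :
    Unbordered (W₁ ++ [c] ++ W₂) := by
  intro B hB
  obtain ⟨C, hC, hCshort⟩ := hB.exists_two_mul_length_le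
  have hlen : (W₁ ++ [c] ++ W₂).length = 2 * n + 1 := by
    simp only [List.length_append, List.length_singleton, h₁, h₂]; omega
  exact hW C (hC.of_append_middle (by omega) (by omega))
end

section
/- Let W = W₁W₂ be an unbordered word of odd length 2n+1 over an arbitrary alphabet, where |W₁| = n and |W₂| = n+1. Then for a letter c, the word W₁cW₂ (of length 2n+2) is unbordered if and only if W₁c ≠ W₂, where W₁c denotes W₁ with the letter c appended. -/
/-- If `W = W₁W₂` is an unbordered word of odd length `2n+1` with `|W₁| = n` and
`|W₂| = n+1`, then for a letter `c`, the word `W₁cW₂` is unbordered if and only if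
`W₁c ≠ W₂`. -/
theorem unbordered_insert_middle_odd {α : Type*} (n : ℕ) (W₁ W₂ : List α)
    (h₁ : W₁.length = n) (h₂ : W₂.length = n + 1)
    (hW : Unbordered (W₁ ++ W₂)) (c : α) :
    Unbordered (W₁ ++ [c] ++ W₂) ↔ W₁ ++ [c] ≠ W₂ := by
  have hlen' : (W₁ ++ [c] ++ W₂).length = 2*n + 2 := by
    simp [h₁, h₂]; omega
  constructor
  · intro hU heq
    refine hU W₂ ⟨?_, ?_, ⟨W₁ ++ [c], rfl⟩, ⟨W₂, by rw [← heq]⟩⟩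
    · intro h; rw [h] at h₂; simp at h₂
    · rw [hlen', h₂]; omega
  · intro hne B hB
    obtain ⟨hBne, hBlen, hBsuf, hBpre⟩ := hB
    have hk1 : 1 ≤ B.length := List.length_pos_iff.mpr hBne
    have hklt : B.length < 2*n+2 := hlen' ▸ hBlen
    set k := B.length with hk
    by_cases hkn : k = n + 1
    · -- then B = W₁ ++ [c] = W₂
      apply hne
      have e1 : B = (W₁ ++ [c] ++ W₂).take k := List.prefix_iff_eq_take.mp hBpre
      have e2 : B = (W₁ ++ [c] ++ W₂).drop ((W₁ ++ [c] ++ W₂).length - k) :=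
        List.suffix_iff_eq_drop.mp hBsuf
      rw [hlen', hkn] at e2
      have d1 : (W₁ ++ [c] ++ W₂).take k = W₁ ++ [c] := by
        rw [hkn]
        have : (W₁ ++ [c]).length = n + 1 := by simp [h₁]
        rw [List.take_left' this]
      have d2 : (W₁ ++ [c] ++ W₂).drop (2*n+2 - (n+1)) = W₂ := by
        have h3 : 2*n+2 - (n+1) = n+1 := by omega
        have : (W₁ ++ [c]).length = n + 1 := by simp [h₁]
        rw [h3, List.drop_left' this]
      rw [d1] at e1
      rw [d2] at e2
      rw [← e1, ← e2]
    · -- main case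
      set W' := W₁ ++ [c] ++ W₂ with hW'def
      set m := 2*n+2 - k with hm
      have hm1 : 1 ≤ m := by omega
      have hmn : m ≠ n + 1 := by omega
      have e1 : B = W'.take k := List.prefix_iff_eq_take.mp hBpre
      have e2 : B = W'.drop m := by
        have := List.suffix_iff_eq_drop.mp hBsuf
        rwa [hlen'] at this
      -- period m of W'
      have hper : ∀ x, x < k → W'[x]? = W'[m + x]? := by
        intro x hx
        rw [← List.getElem?_drop, ← e2, e1, List.getElem?_take_of_lt hx]
      have hpow : ∀ t x, x + m * t < 2*n+2 → W'[x]? = W'[x + m * t]? := by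
        intro t
        induction t with
        | zero => intro x _; simp
        | succ t ih =>
          intro x hx
          have hxk : x < k := by
            have : m * 1 ≤ m * (t+1) := Nat.mul_le_mul_left m (by omega)
            omega
          rw [hper x hxk]
          have : m + x + m * t = x + m * (t+1) := by ring
          rw [← this]
          exact ih (m + x) (by omega)
      -- choose t
      set t := (n+1)/m + 1 with ht
      have hdm := Nat.div_add_mod (n+1) m
      have hmod := Nat.mod_lt (n+1) (show 0 < m by omega)
      have hmt1 : n + 2 ≤ m * t := by
        rw [ht, Nat.mul_add, Nat.mul_one]
        omega
      have hmt2 : m * t ≤ 2*n+1 := by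
        by_cases hc : m ≤ n
        · rw [ht, Nat.mul_add, Nat.mul_one]
          omega
        · have hm2 : n + 2 ≤ m := by omega
          have : (n+1)/m = 0 := Nat.div_eq_of_lt (by omega)
          rw [ht, this]
          omega
      set q := m * t - 1 with hq
      have hq1 : n + 1 ≤ q := by omega
      have hq2 : q ≤ 2*n := by omega
      -- period q of W = W₁ ++ W₂
      have hWlen : (W₁ ++ W₂).length = 2*n+1 := by simp [h₁, h₂]; omega
      have hWper : ∀ i, i + q ≤ 2*n → (W₁ ++ W₂)[i]? = (W₁ ++ W₂)[i + q]? := by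
        intro i hi
        have hin : i < n := by omega
        have c1 : (W₁ ++ W₂)[i]? = W₁[i]? := List.getElem?_append_left (by omega)
        have c2 : W'[i]? = W₁[i]? := by
          rw [hW'def, List.getElem?_append_left (l₂ := W₂) (by simp [h₁]; omega),
            List.getElem?_append_left (by omega)]
        have c3 : W'[i + q + 1]? = W₂[i + q - n]? := by
          rw [hW'def, List.getElem?_append_right (l₂ := W₂) (by simp [h₁]; omega)]
          congr 1
          simp [h₁]
        have c4 : (W₁ ++ W₂)[i + q]? = W₂[i + q - n]? := by
          rw [List.getElem?_append_right (by omega)]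
          congr 1
          omega
        have c5 : W'[i]? = W'[i + m * t]? := hpow t i (by omega)
        have : i + m * t = i + q + 1 := by omega
        rw [this] at c5
        rw [c1, ← c2, c5, c3, ← c4]
      -- the border of W₁ ++ W₂
      refine hW ((W₁ ++ W₂).drop q) ⟨?_, ?_, List.drop_suffix q _, ?_⟩
      · intro h
        have := congrArg List.length h
        rw [List.length_drop, hWlen] at this
        simp at this
        omega
      · rw [List.length_drop, hWlen]
        omega
      · have : (W₁ ++ W₂).drop q = (W₁ ++ W₂).take (2*n+1 - q) := by
          apply List.ext_getElem?
          intro i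
          rw [List.getElem?_drop]
          by_cases hi : i < 2*n+1 - q
          · rw [List.getElem?_take_of_lt hi, show q + i = i + q from by omega,
              ← hWper i (by omega)]
          · rw [List.getElem?_eq_none (l := (W₁ ++ W₂).take (2*n+1-q)) (by
              rw [List.length_take, hWlen]; omega)]
            exact List.getElem?_eq_none (by rw [hWlen]; omega)
        rw [this]
        exact List.take_prefix _ _
end

section
/- Fix an integer q ≥ 2 and let b_m denote the number of 1-unbordered words of length m over ℤ/qℤ. Then b_0 = 1, b_{2n+1} = q·b_{2n} for all n ≥ 0, and b_{2n} = q·b_{2n-1} − 2·b_n for all n ≥ 1. -/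
/-- For a word `W` over `ℤ/qℤ`, `addOneFirst W` is the word `W'` obtained by adding `1`
to the first letter of `W` (and the empty word for the empty word). -/
def addOneFirst {q : ℕ} : List (ZMod q) → List (ZMod q)
  | [] => []
  | x :: xs => (x + 1) :: xs

/-- A word `W` over `ℤ/qℤ` is 1-unbordered if no nonempty proper suffix of `W` is equal
to a prefix of `W` or to a prefix of `W'` (where `W'` is `W` with `1` added to its first
letter). -/
def OneUnbordered {q : ℕ} (W : List (ZMod q)) : Prop :=
  ∀ S : List (ZMod q), S ≠ [] → S.length < W.length → S <:+ W →
    ¬ S <+: W ∧ ¬ S <+: addOneFirst W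

/-- The number of 1-unbordered words of length `m` over `ℤ/qℤ`. -/
noncomputable def countOneUnbordered (q m : ℕ) : ℕ :=
  Nat.card {w : List (ZMod q) // w.length = m ∧ OneUnbordered w}


/-!
If the suffix of length `k` of a word `W` of length `m` is a prefix of `W` or of `W'` and
`m < 2k < 2m`, the overlap makes `W` periodic with period `m - k`, so the suffix of length
`2k - m` is again such a prefix. Hence only borders with `2k ≤ m` matter, and these do not see the
middle letter. For odd `m`, erasing the middle letter therefore preserves 1-unborderedness, and the
erased letter can be any of the `q` letters. For `m = 2n` the only extra obstruction is a border of
length `n`, i.e. `W = SS` or `W = SS'`; the middle-erasure of such a word is `S ++ S.tail`, which is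
1-unbordered iff `S` is. So the `q b(2n-1)` words of length `2n` with 1-unbordered middle-erasure
are the `b(2n)` 1-unbordered ones and the `2 b(n)` doubled ones.
-/

namespace List

variable {α : Type*}

theorem rtake_append_of_le_length {l₁ l₂ : List α} {k : ℕ} (h : k ≤ l₂.length) :
    (l₁ ++ l₂).rtake k = l₂.rtake k := by
  simp only [rtake, length_append, drop_append]
  rw [drop_eq_nil_of_le (by omega), nil_append]
  congr 1
  omega

theorem rtake_drop_of_add_le {l : List α} {i k : ℕ} (h : i + k ≤ l.length) :
    (l.drop i).rtake k = l.rtake k := by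
  simp only [rtake, length_drop, drop_drop]
  congr 1
  omega

theorem eq_take_append_iff_drop_eq {l l' : List α} {n : ℕ} :
    l = l.take n ++ l' ↔ l.drop n = l' := by
  nth_rw 1 [← take_append_drop n l]
  rw [append_cancel_left_eq]

theorem eraseIdx_append_length (l₁ l₂ : List α) :
    (l₁ ++ l₂).eraseIdx l₁.length = l₁ ++ l₂.tail := by
  rw [eraseIdx_append_of_length_le le_rfl, Nat.sub_self, eraseIdx_zero]

theorem rtake_eq_modifyHead_take_of_overlap {f : α → α} {W : List α} {k : ℕ}
    (h : W.rtake k = (W.take k).modifyHead f) (hk : k < W.length) (hkW : W.length < 2 * k) :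
    W.rtake (2 * k - W.length) = (W.take (2 * k - W.length)).modifyHead f := by
  set p := W.length - k with hp
  rw [rtake, ← hp, ← take_modifyHead] at h
  rw [rtake, ← take_modifyHead, show W.length - (2 * k - W.length) = p + p by omega,
    show 2 * k - W.length = k - p by omega]
  calc W.drop (p + p) = (W.drop p).drop p := by rw [drop_drop]
    _ = ((W.modifyHead f).take k).drop p := by rw [h]
    _ = ((W.modifyHead f).drop p).take (k - p) := drop_take
    _ = (W.drop p).take (k - p) := by rw [drop_modifyHead_of_pos (by omega)]
    _ = (W.modifyHead f).take (k - p) := by rw [h, take_take, min_eq_left (by omega)]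

theorem ncard_setOf_length_eraseIdx (P : List α → Prop) {m j : ℕ} (hj : j < m) :
    {w : List α | w.length = m ∧ P (w.eraseIdx j)}.ncard =
      Nat.card α * {w : List α | w.length = m - 1 ∧ P w}.ncard := by
  rw [← Nat.card_coe_set_eq, ← Nat.card_coe_set_eq, ← Nat.card_prod]
  refine Nat.card_congr
    { toFun := fun w => (w.1[j]'(by rw [w.2.1]; exact hj),
        ⟨w.1.eraseIdx j, by rw [length_eraseIdx_of_lt (by rw [w.2.1]; exact hj), w.2.1], w.2.2⟩)
      invFun := fun p => ⟨p.2.1.insertIdx j p.1,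
        by rw [length_insertIdx_of_le_length (by rw [p.2.2.1]; omega), p.2.2.1]; omega,
        by rw [eraseIdx_insertIdx_self]; exact p.2.2.2⟩
      left_inv := fun w => Subtype.ext (insertIdx_eraseIdx_getElem _)
      right_inv := fun p =>
        Prod.ext (getElem_insertIdx_self _) (Subtype.ext (eraseIdx_insertIdx_self _)) }

theorem append_injective_of_length_eq {f : List α → List α}
    (hf : ∀ S, (f S).length = S.length) : Function.Injective fun S => S ++ f S := by
  intro S T h
  have hlen := congrArg length h
  simp only [length_append, hf] at hlen
  exact (append_inj h (by omega)).1

end List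

open List

variable {q : ℕ}

theorem addOneFirst_eq_modifyHead (W : List (ZMod q)) :
    addOneFirst W = W.modifyHead (· + 1) := by
  cases W <;> rfl

@[simp] theorem length_addOneFirst (W : List (ZMod q)) : (addOneFirst W).length = W.length := by
  simp [addOneFirst_eq_modifyHead]

theorem take_addOneFirst (W : List (ZMod q)) (k : ℕ) :
    (addOneFirst W).take k = addOneFirst (W.take k) := by
  simp [addOneFirst_eq_modifyHead]

theorem tail_addOneFirst (W : List (ZMod q)) : (addOneFirst W).tail = W.tail := by
  cases W <;> rfl

theorem addOneFirst_ne_self [Nontrivial (ZMod q)] {W : List (ZMod q)} (hW : W ≠ []) :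
    addOneFirst W ≠ W := by
  cases W with
  | nil => exact absurd rfl hW
  | cons x xs => simp [addOneFirst]

def IsOneBorder (W : List (ZMod q)) (k : ℕ) : Prop :=
  W.rtake k = W.take k ∨ W.rtake k = addOneFirst (W.take k)

theorem isOneBorder_length_iff_of_suffix {S W : List (ZMod q)} (h : S <:+ W) :
    IsOneBorder W S.length ↔ S <+: W ∨ S <+: addOneFirst W := by
  rw [IsOneBorder, rtake, ← suffix_iff_eq_drop.1 h, prefix_iff_eq_take, prefix_iff_eq_take,
    take_addOneFirst]

theorem oneUnbordered_iff_forall_not_isOneBorder {W : List (ZMod q)} :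
    OneUnbordered W ↔ ∀ k, 0 < k → k < W.length → ¬ IsOneBorder W k := by
  constructor
  · intro h k hk hkW hb
    have hsuf : W.rtake k <:+ W := drop_suffix _ _
    have hlen : (W.rtake k).length = k := by simp [rtake]; omega
    obtain ⟨h₁, h₂⟩ := h _ (ne_nil_of_length_pos (by omega)) (by omega) hsuf
    rw [← hlen, isOneBorder_length_iff_of_suffix hsuf] at hb
    exact hb.elim h₁ h₂
  · intro h S hS hSW hsuf
    have := h S.length (length_pos_iff.2 hS) hSW
    rwa [isOneBorder_length_iff_of_suffix hsuf, not_or] at this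

theorem IsOneBorder.overlap {W : List (ZMod q)} {k : ℕ} (h : IsOneBorder W k)
    (hk : k < W.length) (hkW : W.length < 2 * k) : IsOneBorder W (2 * k - W.length) := by
  rw [IsOneBorder, addOneFirst_eq_modifyHead] at h ⊢
  rcases h with h | h
  · left
    simpa using rtake_eq_modifyHead_take_of_overlap (f := id) (by simpa using h) hk hkW
  · exact Or.inr (rtake_eq_modifyHead_take_of_overlap h hk hkW)

theorem IsOneBorder.exists_two_mul_le {W : List (ZMod q)} {k : ℕ} (h : IsOneBorder W k)
    (hk₀ : 0 < k) (hk : k < W.length) : ∃ j, 0 < j ∧ 2 * j ≤ W.length ∧ IsOneBorder W j := by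
  induction k using Nat.strong_induction_on with
  | _ k ih =>
    by_cases hkW : 2 * k ≤ W.length
    · exact ⟨k, hk₀, hkW, h⟩
    · exact ih _ (by omega) (h.overlap hk (by omega)) (by omega) (by omega)

theorem oneUnbordered_iff_forall_two_mul_le {W : List (ZMod q)} :
    OneUnbordered W ↔ ∀ k, 0 < k → 2 * k ≤ W.length → ¬ IsOneBorder W k := by
  rw [oneUnbordered_iff_forall_not_isOneBorder]
  refine ⟨fun h k hk hkW => h k hk (by omega), fun h k hk hkW hb => ?_⟩
  obtain ⟨j, hj, hjW, hbj⟩ := hb.exists_two_mul_le hk hkW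
  exact h j hj hjW hbj

theorem isOneBorder_congr {W V : List (ZMod q)} {k : ℕ} (htake : W.take k = V.take k)
    (hrtake : W.rtake k = V.rtake k) : IsOneBorder W k ↔ IsOneBorder V k := by
  rw [IsOneBorder, IsOneBorder, htake, hrtake]

theorem isOneBorder_eraseIdx_iff {W : List (ZMod q)} {j k : ℕ} (hkj : k ≤ j)
    (hjk : j + k < W.length) : IsOneBorder (W.eraseIdx j) k ↔ IsOneBorder W k :=
  isOneBorder_congr (take_eraseIdx_eq_take_of_le _ _ _ hkj) <| by
    rw [eraseIdx_eq_take_drop_succ, rtake_append_of_le_length (by simp; omega),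
      rtake_drop_of_add_le (by omega)]

theorem oneUnbordered_iff_eraseIdx_middle {W : List (ZMod q)} :
    OneUnbordered W ↔ OneUnbordered (W.eraseIdx (W.length / 2)) ∧
      ∀ k, 0 < k → 2 * k = W.length → ¬ IsOneBorder W k := by
  have hlen : (W.eraseIdx (W.length / 2)).length = W.length - 1 := by
    rw [length_eraseIdx]; split <;> omega
  rw [oneUnbordered_iff_forall_two_mul_le, oneUnbordered_iff_forall_two_mul_le, hlen]
  constructor
  · intro h
    refine ⟨fun k hk hkW => ?_, fun k hk hkW => h k hk hkW.le⟩
    rw [isOneBorder_eraseIdx_iff (by omega) (by omega)]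
    exact h k hk (by omega)
  · rintro ⟨h, hmid⟩ k hk hkW
    rcases hkW.lt_or_eq with hkW | hkW
    · rw [← isOneBorder_eraseIdx_iff (j := W.length / 2) (by omega) (by omega)]
      exact h k hk (by omega)
    · exact hmid k hk hkW

theorem oneUnbordered_iff_eraseIdx_of_length_eq_two_mul_add_one {W : List (ZMod q)} {n : ℕ}
    (hW : W.length = 2 * n + 1) : OneUnbordered W ↔ OneUnbordered (W.eraseIdx n) := by
  rw [oneUnbordered_iff_eraseIdx_middle, hW, show (2 * n + 1) / 2 = n by omega]
  exact ⟨And.left, fun h => ⟨h, fun k _ hk => by omega⟩⟩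

theorem oneUnbordered_iff_eraseIdx_of_length_eq_two_mul {W : List (ZMod q)} {n : ℕ} (hn : 0 < n)
    (hW : W.length = 2 * n) :
    OneUnbordered W ↔ OneUnbordered (W.eraseIdx n) ∧ ¬ IsOneBorder W n := by
  rw [oneUnbordered_iff_eraseIdx_middle, hW, show 2 * n / 2 = n by omega]
  refine and_congr_right fun _ => ⟨fun h => h n hn rfl, fun h k _ hk => ?_⟩
  rwa [show k = n by omega]

theorem isOneBorder_iff_of_length_eq_two_mul {W : List (ZMod q)} {n : ℕ}
    (hW : W.length = 2 * n) :
    IsOneBorder W n ↔ W = W.take n ++ W.take n ∨ W = W.take n ++ addOneFirst (W.take n) := by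
  rw [IsOneBorder, rtake, hW, show 2 * n - n = n by omega, eq_take_append_iff_drop_eq,
    eq_take_append_iff_drop_eq]

theorem oneUnbordered_append_tail_iff {S : List (ZMod q)} :
    OneUnbordered (S ++ S.tail) ↔ OneUnbordered S := by
  rw [oneUnbordered_iff_forall_two_mul_le, oneUnbordered_iff_forall_not_isOneBorder]
  have hlen : (S ++ S.tail).length = S.length + (S.length - 1) := by simp
  have hborder : ∀ k < S.length, IsOneBorder (S ++ S.tail) k ↔ IsOneBorder S k := fun k hk =>
    isOneBorder_congr (take_append_of_le_length (by omega)) <| by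
      rw [rtake_append_of_le_length (by simp; omega), ← drop_one, rtake_drop_of_add_le (by omega)]
  refine forall_congr' fun k => imp_congr_right fun hk => ?_
  rw [hlen]
  constructor
  · intro h hkS
    rw [← hborder k hkS]
    exact h (by omega)
  · intro h hkS
    rw [hborder k (by omega)]
    exact h (by omega)

theorem oneUnbordered_eraseIdx_append_iff {S T : List (ZMod q)} {n : ℕ} (hS : S.length = n)
    (hT : T.tail = S.tail) : OneUnbordered ((S ++ T).eraseIdx n) ↔ OneUnbordered S := by
  rw [← hS, eraseIdx_append_length, hT, oneUnbordered_append_tail_iff]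

def oneUnborderedWords (q m : ℕ) : Set (List (ZMod q)) :=
  {w | w.length = m ∧ OneUnbordered w}

theorem countOneUnbordered_eq_ncard (q m : ℕ) :
    countOneUnbordered q m = (oneUnborderedWords q m).ncard := rfl

def doubledWords (q n : ℕ) : Set (List (ZMod q)) :=
  (fun S => S ++ S) '' oneUnborderedWords q n ∪
    (fun S => S ++ addOneFirst S) '' oneUnborderedWords q n

theorem setOf_oneUnbordered_eraseIdx_eq {n : ℕ} (hn : 0 < n) :
    {W : List (ZMod q) | W.length = 2 * n ∧ OneUnbordered (W.eraseIdx n)} =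
      oneUnborderedWords q (2 * n) ∪ doubledWords q n := by
  ext W
  simp only [oneUnborderedWords, doubledWords, Set.mem_ofPred_eq, Set.mem_union, Set.mem_image]
  constructor
  · rintro ⟨hW, hU⟩
    by_cases hb : IsOneBorder W n
    · right
      have hS : (W.take n).length = n := by simp; omega
      rcases (isOneBorder_iff_of_length_eq_two_mul hW).1 hb with h | h <;> rw [h] at hU
      · exact Or.inl ⟨_, ⟨hS, (oneUnbordered_eraseIdx_append_iff hS rfl).1 hU⟩, h.symm⟩
      · exact Or.inr ⟨_, ⟨hS, (oneUnbordered_eraseIdx_append_iff hS (tail_addOneFirst _)).1 hU⟩,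
          h.symm⟩
    · exact Or.inl ⟨hW, (oneUnbordered_iff_eraseIdx_of_length_eq_two_mul hn hW).2 ⟨hU, hb⟩⟩
  · rintro (⟨hW, hU⟩ | ⟨S, ⟨hS, hU⟩, rfl⟩ | ⟨S, ⟨hS, hU⟩, rfl⟩)
    · exact ⟨hW, ((oneUnbordered_iff_eraseIdx_of_length_eq_two_mul hn hW).1 hU).1⟩
    · refine ⟨by simp [hS]; omega, ?_⟩
      rwa [oneUnbordered_eraseIdx_append_iff hS rfl]
    · refine ⟨by simp [hS]; omega, ?_⟩
      rwa [oneUnbordered_eraseIdx_append_iff hS (tail_addOneFirst S)]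

instance [NeZero q] (m : ℕ) : Finite (oneUnborderedWords q m) :=
  ((finite_length_eq _ m).subset fun _ h => h.1).to_subtype

instance [NeZero q] (n : ℕ) : Finite (doubledWords q n) :=
  Finite.Set.finite_union _ _

theorem disjoint_oneUnborderedWords_doubledWords {n : ℕ} (hn : 0 < n) :
    Disjoint (oneUnborderedWords q (2 * n)) (doubledWords q n) := by
  rw [Set.disjoint_left]
  rintro W ⟨hW, hU⟩ hD
  refine oneUnbordered_iff_forall_not_isOneBorder.1 hU n hn (by omega)
    ((isOneBorder_iff_of_length_eq_two_mul hW).2 ?_)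
  rcases hD with ⟨S, ⟨hS, -⟩, rfl⟩ | ⟨S, ⟨hS, -⟩, rfl⟩ <;> simp [take_left' hS]

theorem ncard_doubledWords [NeZero q] [Nontrivial (ZMod q)] {n : ℕ} (hn : 0 < n) :
    (doubledWords q n).ncard = 2 * countOneUnbordered q n := by
  have hdisj : Disjoint ((fun S => S ++ S) '' oneUnborderedWords q n)
      ((fun S => S ++ addOneFirst S) '' oneUnborderedWords q n) := by
    rw [Set.disjoint_left]
    rintro _ ⟨S, ⟨hS, -⟩, rfl⟩ ⟨T, ⟨hT, -⟩, h⟩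
    obtain ⟨rfl, h⟩ := append_inj h (hT.trans hS.symm)
    exact addOneFirst_ne_self (ne_nil_of_length_pos (hT ▸ hn)) h
  rw [doubledWords, Set.ncard_union_eq hdisj,
    Set.ncard_image_of_injective _ (append_injective_of_length_eq fun _ => rfl),
    Set.ncard_image_of_injective _ (append_injective_of_length_eq length_addOneFirst),
    countOneUnbordered_eq_ncard, two_mul]

theorem countOneUnbordered_zero : countOneUnbordered q 0 = 1 := by
  have h : oneUnborderedWords q 0 = {[]} := by
    ext W
    simp only [oneUnborderedWords, Set.mem_ofPred_eq, Set.mem_singleton_iff, length_eq_zero_iff]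
    refine and_iff_left_of_imp ?_
    rintro rfl S _ hS
    simp at hS
  rw [countOneUnbordered_eq_ncard, h, Set.ncard_singleton]

theorem countOneUnbordered_two_mul_add_one (n : ℕ) :
    countOneUnbordered q (2 * n + 1) = q * countOneUnbordered q (2 * n) := by
  have h : oneUnborderedWords q (2 * n + 1) =
      {W | W.length = 2 * n + 1 ∧ OneUnbordered (W.eraseIdx n)} := by
    ext W
    exact and_congr_right oneUnbordered_iff_eraseIdx_of_length_eq_two_mul_add_one
  rw [countOneUnbordered_eq_ncard, h, ncard_setOf_length_eraseIdx _ (by omega), Nat.card_zmod]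
  rfl

theorem countOneUnbordered_two_mul (hq : 2 ≤ q) {n : ℕ} (hn : 0 < n) :
    countOneUnbordered q (2 * n) + 2 * countOneUnbordered q n =
      q * countOneUnbordered q (2 * n - 1) := by
  have : Fact (1 < q) := ⟨hq⟩
  calc countOneUnbordered q (2 * n) + 2 * countOneUnbordered q n
      = (oneUnborderedWords q (2 * n) ∪ doubledWords q n).ncard := by
        rw [Set.ncard_union_eq (disjoint_oneUnborderedWords_doubledWords hn),
          ncard_doubledWords hn, countOneUnbordered_eq_ncard]
    _ = q * countOneUnbordered q (2 * n - 1) := by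
        rw [← setOf_oneUnbordered_eraseIdx_eq hn, ncard_setOf_length_eraseIdx _ (by omega),
          Nat.card_zmod]
        rfl

/-- For `q ≥ 2`, the counts `b m` of 1-unbordered words of length `m` over `ℤ/qℤ`
satisfy `b 0 = 1`, `b (2n+1) = q·b (2n)`, and `b (2n) = q·b (2n-1) − 2·b n`
(for `n ≥ 1`). -/
theorem oneUnbordered_count_recursion (q : ℕ) (hq : 2 ≤ q) :
    countOneUnbordered q 0 = 1 ∧
    (∀ n : ℕ, countOneUnbordered q (2 * n + 1) = q * countOneUnbordered q (2 * n)) ∧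
    (∀ n : ℕ, 1 ≤ n →
      (countOneUnbordered q (2 * n) : ℤ) =
        q * countOneUnbordered q (2 * n - 1) - 2 * countOneUnbordered q n) := by
  refine ⟨countOneUnbordered_zero, countOneUnbordered_two_mul_add_one, fun n hn => ?_⟩
  have h : (countOneUnbordered q (2 * n) : ℤ) + 2 * countOneUnbordered q n =
      q * countOneUnbordered q (2 * n - 1) := by
    exact_mod_cast countOneUnbordered_two_mul hq hn
  linarith
end

section
/- Fix an integer q ≥ 2 and let b_m denote the number of 1-unbordered words of length m over ℤ/qℤ. For every n ≥ 1 and every letter a ∈ ℤ/qℤ, q times the number of 1-unbordered words of length n over ℤ/qℤ whose first letter is a equals b_n; in particular this count is independent of the letter a. -/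
/-- The number of 1-unbordered words of length `m` over `ℤ/qℤ` whose first letter is
`a`. -/
noncomputable def countOneUnborderedFirst (q m : ℕ) (a : ZMod q) : ℕ :=
  Nat.card {w : List (ZMod q) // w.length = m ∧ OneUnbordered w ∧ w.head? = some a}

/- ### Auxiliary lemmas -/

lemma addOneFirst_map_add {q : ℕ} (c : ZMod q) (w : List (ZMod q)) :
    addOneFirst (w.map (· + c)) = (addOneFirst w).map (· + c) := by
  cases w with
  | nil => rfl
  | cons x xs => simp [addOneFirst, add_right_comm]

lemma map_add_map_add {q : ℕ} (c d : ZMod q) (w : List (ZMod q)) :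
    (w.map (· + c)).map (· + d) = w.map (· + (c + d)) := by
  simp [List.map_map, Function.comp_def, add_assoc]

lemma oneUnbordered_map_add {q : ℕ} (c : ZMod q) {w : List (ZMod q)}
    (h : OneUnbordered w) : OneUnbordered (w.map (· + c)) := by
  intro S hne hlen hsuf
  set T := S.map (· + (-c)) with hT
  have hTne : T ≠ [] := by
    simpa [hT] using hne
  have hTlen : T.length < w.length := by
    simpa [hT] using hlen
  have hTsuf : T <:+ w := by
    have h' := hsuf.map (· + (-c))
    rw [map_add_map_add] at h'
    simpa [hT] using h'
  obtain ⟨h1, h2⟩ := h T hTne hTlen hTsuf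
  constructor
  · intro hp
    apply h1
    have h' := hp.map (· + (-c))
    rw [map_add_map_add] at h'
    simpa [hT] using h'
  · intro hp
    apply h2
    rw [addOneFirst_map_add] at hp
    have h' := hp.map (· + (-c))
    rw [map_add_map_add] at h'
    simpa [hT] using h'

lemma oneUnbordered_map_add_iff {q : ℕ} (c : ZMod q) (w : List (ZMod q)) :
    OneUnbordered (w.map (· + c)) ↔ OneUnbordered w := by
  constructor
  · intro h
    have := oneUnbordered_map_add (-c) h
    rw [map_add_map_add] at this
    simpa using this
  · exact oneUnbordered_map_add c

lemma head?_map_add_iff {q : ℕ} (c a : ZMod q) (w : List (ZMod q)) :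
    (w.map (· + c)).head? = some (a + c) ↔ w.head? = some a := by
  cases w with
  | nil => simp
  | cons x xs =>
    simp [add_left_inj]

lemma finite_aux (q n : ℕ) [NeZero q] (P : List (ZMod q) → Prop) :
    Finite {w : List (ZMod q) // w.length = n ∧ P w} := by
  have hsub : {w : List (ZMod q) | w.length = n ∧ P w} ⊆ {w | w.length = n} :=
    fun w h => h.1
  exact Set.Finite.to_subtype (Set.Finite.subset (List.finite_length_eq (ZMod q) n) hsub)

/-- Shifting every letter by `c` gives a bijection between words with first letter `a`
and words with first letter `a + c`. -/
noncomputable def shiftEquiv (q n : ℕ) (a c : ZMod q) :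
    {w : List (ZMod q) // w.length = n ∧ OneUnbordered w ∧ w.head? = some a} ≃
    {w : List (ZMod q) // w.length = n ∧ OneUnbordered w ∧ w.head? = some (a + c)} :=
  Equiv.subtypeEquiv (Equiv.listEquivOfEquiv (Equiv.addRight c)) (by
    intro w
    have hmap : (Equiv.listEquivOfEquiv (Equiv.addRight c)) w = w.map (· + c) := rfl
    rw [hmap]
    constructor
    · rintro ⟨h1, h2, h3⟩
      exact ⟨by simp [h1], (oneUnbordered_map_add_iff c w).mpr h2,
        (head?_map_add_iff c a w).mpr h3⟩
    · rintro ⟨h1, h2, h3⟩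
      exact ⟨by simpa using h1, (oneUnbordered_map_add_iff c w).mp h2,
        (head?_map_add_iff c a w).mp h3⟩)

lemma countFirst_eq (q n : ℕ) (a b : ZMod q) :
    countOneUnborderedFirst q n a = countOneUnborderedFirst q n b := by
  have := Nat.card_congr (shiftEquiv q n a (b - a))
  simpa [countOneUnborderedFirst, add_sub_cancel] using this

/-- Splitting the 1-unbordered words of positive length by their first letter. -/
noncomputable def sigmaEquiv (q n : ℕ) (hn : 1 ≤ n) :
    {w : List (ZMod q) // w.length = n ∧ OneUnbordered w} ≃
    Σ b : ZMod q, {w : List (ZMod q) // w.length = n ∧ OneUnbordered w ∧ w.head? = some b} where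
  toFun := fun ⟨w, hw⟩ =>
    ⟨w.head (by intro h; rw [h] at hw; simp at hw; omega),
     ⟨w, hw.1, hw.2, List.head?_eq_head _⟩⟩
  invFun := fun ⟨b, ⟨w, hw⟩⟩ => ⟨w, hw.1, hw.2.1⟩
  left_inv := fun ⟨w, hw⟩ => rfl
  right_inv := fun ⟨b, ⟨w, hw⟩⟩ => by
    have hne : w ≠ [] := by intro h; rw [h] at hw; simp at hw
    have hb : w.head hne = b := by
      have h2 := hw.2.2
      rw [List.head?_eq_head hne] at h2
      exact Option.some.inj h2
    subst hb
    rfl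

/-- For `q ≥ 2`, every `n ≥ 1` and every letter `a ∈ ℤ/qℤ`, `q` times the number of
1-unbordered words of length `n` over `ℤ/qℤ` whose first letter is `a` equals `b n`,
the total number of 1-unbordered words of length `n`; in particular the count is
independent of `a`. -/
theorem oneUnbordered_first_letter_equidistributed (q : ℕ) (hq : 2 ≤ q)
    (n : ℕ) (hn : 1 ≤ n) (a : ZMod q) :
    q * countOneUnborderedFirst q n a = countOneUnbordered q n := by
  haveI : NeZero q := ⟨by omega⟩
  haveI : Fintype (ZMod q) := ZMod.fintype q
  haveI := finite_aux q n (fun w => OneUnbordered w)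
  haveI : ∀ b : ZMod q, Finite
      {w : List (ZMod q) // w.length = n ∧ OneUnbordered w ∧ w.head? = some b} :=
    fun b => finite_aux q n (fun w => OneUnbordered w ∧ w.head? = some b)
  haveI := fun b : ZMod q => Fintype.ofFinite
    {w : List (ZMod q) // w.length = n ∧ OneUnbordered w ∧ w.head? = some b}
  have key : countOneUnbordered q n = ∑ b : ZMod q, countOneUnborderedFirst q n b := by
    rw [countOneUnbordered, Nat.card_congr (sigmaEquiv q n hn)]
    rw [Nat.card_eq_fintype_card]
    simp only [Fintype.card_sigma]
    simp [countOneUnborderedFirst, Nat.card_eq_fintype_card]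
  rw [key]
  have : ∀ b : ZMod q, countOneUnborderedFirst q n b = countOneUnborderedFirst q n a :=
    fun b => countFirst_eq q n b a
  rw [Finset.sum_congr rfl (fun b _ => this b), Finset.sum_const, Finset.card_univ,
    ZMod.card, smul_eq_mul]
end

section
/- Let T be a tree polynomial of degree q. Then for every non-leaf vertex v of T, q·ℓ(v) = ∑ ℓ(w), where the sum is over all children w of v. -/
/-- A *tree polynomial* on a finite vertex type `V`: a finite rooted tree in which all
leaves have a common depth `n`, equipped with a critical/ordinary classification of
vertices, an order on the children of each vertex (encoded by `childIdx`, injective on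
siblings), a simplicial self-map `f` compatible with this data, and a length function
`ℓ` to the positive integers.

The tree is encoded by a `parent` function together with a `depth` function; children of
`v` are the non-root vertices `w` with `parent w = v`, and leaves are the childless
vertices. -/
structure TreePolynomial (V : Type*) [Fintype V] [DecidableEq V] where
  root : V
  parent : V → V
  depth : V → ℕ
  /-- the common depth of all leaves, the depth of the tree -/
  n : ℕ
  critical : V → Prop
  /-- the order on the children of each vertex: siblings are linearly ordered by
  `childIdx`. -/
  childIdx : V → ℕ
  /-- the simplicial self-map -/
  f : V → V
  /-- the length function -/
  ell : V → ℕ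
  parent_root : parent root = root
  depth_root : depth root = 0
  depth_eq : ∀ v, v ≠ root → depth v = depth (parent v) + 1
  depth_le : ∀ v, depth v ≤ n
  /-- all leaves (childless vertices) have the common depth `n` -/
  leaf_depth : ∀ v, (∀ w, w ≠ root → parent w ≠ v) → depth v = n
  root_critical : critical root
  /-- every critical non-leaf vertex has exactly one critical child -/
  crit_child : ∀ v, critical v → depth v < n →
    ∃! w, w ≠ root ∧ parent w = v ∧ critical w
  /-- ordinary vertices have no critical children -/
  ordinary_no_crit_child : ∀ v w, ¬ critical v → w ≠ root → parent w = v → ¬ critical w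
  /-- `childIdx` is injective on siblings, so it linearly orders the children of each
  vertex -/
  childIdx_inj : ∀ w₁ w₂, w₁ ≠ root → w₂ ≠ root → parent w₁ = parent w₂ →
    childIdx w₁ = childIdx w₂ → w₁ = w₂
  /-- the critical child of the root is first among its siblings -/
  root_crit_child_first : ∀ w w', w ≠ root → parent w = root → critical w →
    w' ≠ root → parent w' = root → childIdx w ≤ childIdx w'
  f_root : f root = root
  /-- `f v = root` for every child `v` of the root -/
  f_child_root : ∀ v, v ≠ root → parent v = root → f v = root
  /-- for `v` a child of a non-root vertex `w`, `f v` is a child of `f w` -/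
  f_child : ∀ v, v ≠ root → parent v ≠ root → f v ≠ root ∧ parent (f v) = f (parent v)
  /-- for ordinary non-leaf `v`, `f` is injective on the children of `v` -/
  f_ord_inj : ∀ v, ¬ critical v → ∀ w₁ w₂, w₁ ≠ root → w₂ ≠ root →
    parent w₁ = v → parent w₂ = v → f w₁ = f w₂ → w₁ = w₂
  /-- for ordinary non-leaf `v`, `f` maps the children of `v` onto the children of
  `f v` -/
  f_ord_surj : ∀ v, ¬ critical v → depth v < n → ∀ u, u ≠ root → parent u = f v →
    ∃ w, w ≠ root ∧ parent w = v ∧ f w = u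
  /-- for ordinary non-leaf `v`, `f` is order-preserving on the children of `v` -/
  f_ord_mono : ∀ v, ¬ critical v → ∀ w₁ w₂, w₁ ≠ root → w₂ ≠ root →
    parent w₁ = v → parent w₂ = v → childIdx w₁ ≤ childIdx w₂ →
    childIdx (f w₁) ≤ childIdx (f w₂)
  /-- for critical non-leaf non-root `v`, `f` maps the children of `v` onto the children
  of `f v` -/
  f_crit_surj : ∀ v, critical v → v ≠ root → depth v < n → ∀ u, u ≠ root →
    parent u = f v → ∃ w, w ≠ root ∧ parent w = v ∧ f w = u
  /-- for critical non-leaf non-root `v`, `f` is order non-decreasing on the children of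
  `v` -/
  f_crit_mono : ∀ v, critical v → v ≠ root → ∀ w₁ w₂, w₁ ≠ root → w₂ ≠ root →
    parent w₁ = v → parent w₂ = v → childIdx w₁ ≤ childIdx w₂ →
    childIdx (f w₁) ≤ childIdx (f w₂)
  /-- for critical non-leaf non-root `v` with critical child `c`, the map `f` on the
  children of `v` is 2-to-1 except that `c` is the unique child mapping to its image -/
  f_crit_fibers : ∀ v, critical v → v ≠ root → depth v < n →
    ∀ c, c ≠ root → parent c = v → critical c →
      ((∀ w, w ≠ root → parent w = v → f w = f c → w = c) ∧
       (∀ u, u ≠ root → parent u = f v → u ≠ f c →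
         ∃ w₁ w₂, w₁ ≠ w₂ ∧ (w₁ ≠ root ∧ parent w₁ = v ∧ f w₁ = u) ∧
           (w₂ ≠ root ∧ parent w₂ = v ∧ f w₂ = u) ∧
           ∀ w, w ≠ root → parent w = v → f w = u → w = w₁ ∨ w = w₂))
  ell_pos : ∀ v, 0 < ell v
  ell_root : ell root = 1
  ell_ordinary : ∀ v, ¬ critical v → ell v = ell (f v)
  ell_critical : ∀ v, critical v → v ≠ root → ell v = 2 * ell (f v)

namespace TreePolynomial

variable {V : Type*} [Fintype V] [DecidableEq V]

/-- The children of a vertex `v`: the non-root vertices whose parent is `v`. -/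
def children (T : TreePolynomial V) (v : V) : Finset V :=
  Finset.univ.filter fun w => w ≠ T.root ∧ T.parent w = v

/-- The degree of a tree polynomial: one plus the number of children of the root. -/
def degree (T : TreePolynomial V) : ℕ := 1 + (T.children T.root).card

end TreePolynomial

namespace TreePolynomial

variable {V : Type*} [Fintype V] [DecidableEq V] (T : TreePolynomial V)

lemma mem_children' {w v : V} : w ∈ T.children v ↔ w ≠ T.root ∧ T.parent w = v := by
  simp [children]

lemma depth_f' (v : V) (hv : v ≠ T.root) : T.depth (T.f v) + 1 = T.depth v := by
  suffices H : ∀ k v, T.depth v = k → v ≠ T.root → T.depth (T.f v) + 1 = T.depth v from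
    H _ v rfl hv
  intro k
  induction k using Nat.strong_induction_on with
  | _ k ih =>
    intro v hn hv
    by_cases hp : T.parent v = T.root
    · rw [T.f_child_root v hv hp, T.depth_root, T.depth_eq v hv, hp, T.depth_root]
    · obtain ⟨hfv, hpf⟩ := T.f_child v hv hp
      have hdv := T.depth_eq v hv
      have ih' := ih (T.depth (T.parent v)) (by omega) (T.parent v) rfl hp
      rw [T.depth_eq (T.f v) hfv, hpf]
      omega

end TreePolynomial
open TreePolynomial in
/-- Let `T` be a tree polynomial of degree `q`. Then for every non-leaf vertex `v` of
`T`, `q·ℓ(v) = ∑ ℓ(w)`, the sum over all children `w` of `v`. -/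
theorem TreePolynomial.degree_mul_ell_eq_sum_children
    {V : Type*} [Fintype V] [DecidableEq V] (T : TreePolynomial V) (q : ℕ)
    (hq : T.degree = q) (v : V) (hv : T.depth v < T.n) :
    q * T.ell v = ∑ w ∈ T.children v, T.ell w := by
  suffices H : ∀ k v, T.depth v = k → T.depth v < T.n →
      q * T.ell v = ∑ w ∈ T.children v, T.ell w from H _ v rfl hv
  clear hv v
  intro k
  induction k using Nat.strong_induction_on with
  | _ k ih =>
    intro v hk hv
    by_cases hroot : v = T.root
    · subst hroot
      obtain ⟨c, ⟨hc1, hc2, hc3⟩, hcu⟩ := T.crit_child T.root T.root_critical hv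
      have hcmem : c ∈ T.children T.root := T.mem_children'.2 ⟨hc1, hc2⟩
      have hcard : 1 ≤ (T.children T.root).card := Finset.card_pos.2 ⟨c, hcmem⟩
      have hone : ∀ w ∈ (T.children T.root).erase c, T.ell w = 1 := by
        intro w hw
        obtain ⟨hwc, hwmem⟩ := Finset.mem_erase.1 hw
        obtain ⟨hw1, hw2⟩ := T.mem_children'.1 hwmem
        have hord : ¬ T.critical w := fun h => hwc (hcu w ⟨hw1, hw2, h⟩)
        rw [T.ell_ordinary w hord, T.f_child_root w hw1 hw2, T.ell_root]
      have hsum : ∑ w ∈ T.children T.root, T.ell w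
          = T.ell c + ∑ w ∈ (T.children T.root).erase c, T.ell w :=
        (Finset.add_sum_erase _ _ hcmem).symm
      have hones : ∑ w ∈ (T.children T.root).erase c, T.ell w
          = (T.children T.root).card - 1 := by
        rw [Finset.sum_congr rfl hone, Finset.sum_const, smul_eq_mul, mul_one,
          Finset.card_erase_of_mem hcmem]
      have hc2' : T.ell c = 2 := by
        rw [T.ell_critical c hc3 hc1, T.f_child_root c hc1 hc2, T.ell_root]
      rw [T.ell_root, mul_one, hsum, hones, hc2', ← hq]
      simp only [TreePolynomial.degree]
      omega
    · have hdf := T.depth_f' v hroot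
      have hdfn : T.depth (T.f v) < T.n := by omega
      have ihf := ih (T.depth (T.f v)) (by omega) (T.f v) rfl hdfn
      by_cases hcrit : T.critical v
      · obtain ⟨c, ⟨hc1, hc2, hc3⟩, hcu⟩ := T.crit_child v hcrit hv
        have hcmem : c ∈ T.children v := T.mem_children'.2 ⟨hc1, hc2⟩
        have hpvne : ∀ w : V, T.parent w = v → T.parent w ≠ T.root := fun w h =>
          h ▸ hroot
        obtain ⟨hfib1, hfib2⟩ := T.f_crit_fibers v hcrit hroot hv c hc1 hc2 hc3
        obtain ⟨hfc1, hfc2⟩ := T.f_child c hc1 (hpvne c hc2)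
        have hfcmem : T.f c ∈ T.children (T.f v) := T.mem_children'.2 ⟨hfc1, by rw [hfc2, hc2]⟩
        have hmaps : ∀ w ∈ (T.children v).erase c,
            T.f w ∈ (T.children (T.f v)).erase (T.f c) := by
          intro w hw
          obtain ⟨hwc, hwmem⟩ := Finset.mem_erase.1 hw
          obtain ⟨hw1, hw2⟩ := T.mem_children'.1 hwmem
          obtain ⟨h1, h2⟩ := T.f_child w hw1 (hpvne w hw2)
          exact Finset.mem_erase.2 ⟨fun h => hwc (hfib1 w hw1 hw2 h),
            T.mem_children'.2 ⟨h1, by rw [h2, hw2]⟩⟩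
        have hsum2 : ∀ u ∈ (T.children (T.f v)).erase (T.f c),
            ∑ w ∈ ((T.children v).erase c).filter (fun w => T.f w = u),
              T.ell (T.f w) = 2 * T.ell u := by
          intro u hu
          obtain ⟨huc, humem⟩ := Finset.mem_erase.1 hu
          obtain ⟨hu1, hu2⟩ := T.mem_children'.1 humem
          obtain ⟨w₁, w₂, hne, ⟨h11, h12, h13⟩, ⟨h21, h22, h23⟩, hall⟩ :=
            hfib2 u hu1 hu2 huc
          have hw1c : w₁ ≠ c := by rintro rfl; exact huc h13.symm
          have hw2c : w₂ ≠ c := by rintro rfl; exact huc h23.symm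
          have hfilter : ((T.children v).erase c).filter (fun w => T.f w = u)
              = {w₁, w₂} := by
            ext w
            simp only [Finset.mem_filter, Finset.mem_erase, T.mem_children',
              Finset.mem_insert, Finset.mem_singleton]
            constructor
            · rintro ⟨⟨hwc, hw1, hw2⟩, hfw⟩
              exact hall w hw1 hw2 hfw
            · rintro (rfl | rfl)
              · exact ⟨⟨hw1c, h11, h12⟩, h13⟩
              · exact ⟨⟨hw2c, h21, h22⟩, h23⟩
          rw [hfilter, Finset.sum_pair hne, h13, h23]
          omega
        calc q * T.ell v = 2 * (q * T.ell (T.f v)) := by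
              rw [T.ell_critical v hcrit hroot]; ring
          _ = 2 * ∑ u ∈ T.children (T.f v), T.ell u := by rw [ihf]
          _ = 2 * (T.ell (T.f c)
                + ∑ u ∈ (T.children (T.f v)).erase (T.f c), T.ell u) := by
              rw [Finset.add_sum_erase _ _ hfcmem]
          _ = T.ell c + ∑ u ∈ (T.children (T.f v)).erase (T.f c), 2 * T.ell u := by
              rw [T.ell_critical c hc3 hc1, mul_add, Finset.mul_sum]
          _ = T.ell c + ∑ u ∈ (T.children (T.f v)).erase (T.f c),
                ∑ w ∈ ((T.children v).erase c).filter (fun w => T.f w = u),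
                  T.ell (T.f w) := by
              rw [Finset.sum_congr rfl hsum2]
          _ = T.ell c + ∑ w ∈ (T.children v).erase c, T.ell (T.f w) := by
              rw [Finset.sum_fiberwise_of_maps_to hmaps]
          _ = T.ell c + ∑ w ∈ (T.children v).erase c, T.ell w := by
              refine congrArg _ (Finset.sum_congr rfl fun w hw => ?_)
              obtain ⟨hwc, hwmem⟩ := Finset.mem_erase.1 hw
              obtain ⟨hw1, hw2⟩ := T.mem_children'.1 hwmem
              exact (T.ell_ordinary w fun h => hwc (hcu w ⟨hw1, hw2, h⟩)).symm
          _ = ∑ w ∈ T.children v, T.ell w := Finset.add_sum_erase _ _ hcmem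
      · rw [T.ell_ordinary v hcrit, ihf]
        refine (Finset.sum_bij (fun w _ => T.f w) ?_ ?_ ?_ ?_).symm
        · intro w hw
          obtain ⟨hw1, hw2⟩ := T.mem_children'.1 hw
          obtain ⟨h1, h2⟩ := T.f_child w hw1 (by rw [hw2]; exact hroot)
          exact T.mem_children'.2 ⟨h1, by rw [h2, hw2]⟩
        · intro w₁ h1 w₂ h2 heq
          obtain ⟨h11, h12⟩ := T.mem_children'.1 h1
          obtain ⟨h21, h22⟩ := T.mem_children'.1 h2
          exact T.f_ord_inj v hcrit w₁ w₂ h11 h21 h12 h22 heq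
        · intro u hu
          obtain ⟨hu1, hu2⟩ := T.mem_children'.1 hu
          obtain ⟨w, hw1, hw2, hw3⟩ := T.f_ord_surj v hcrit hv u hu1 hu2
          exact ⟨w, T.mem_children'.2 ⟨hw1, hw2⟩, hw3⟩
        · intro w hw
          obtain ⟨hw1, hw2⟩ := T.mem_children'.1 hw
          exact T.ell_ordinary w (T.ordinary_no_crit_child v w hcrit hw1 hw2)
end

section
/- Let F be an F-sequence of length n. For 0 ≤ i ≤ n let κ(i) be the least k ≥ 0 with F^k(i) = 0, and for k ≥ 0 let i_k be the least index i ≤ n with κ(i) = k, when one exists. Then for every k ≥ 1 such that i_k exists, i_{k−1} exists and F(i_k) = i_{k−1}; consequently, whenever i_{k+1} also exists, i_{k+1} − i_k ≥ i_k − i_{k−1}. -/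
/-- The set `Opt F j` of *options* of an index `j` for a function `F : ℕ → ℕ`, defined
by strong recursion on `j` (well-defined for F-sequences since `F j < j` for `j ≥ 1`):
`Opt 0 = {0,1}`; for `j ≥ 1` with `F j = 0`, `Opt j = {j+1} ∪ ({0,1} \ {F (j+1)})`;
for `j ≥ 1` with `F j ≠ 0` and `F (j+1) ≠ F j + 1`, `Opt j = {j+1} ∪ Opt (F j)`;
for `j ≥ 1` with `F j ≠ 0` and `F (j+1) = F j + 1`,
`Opt j = {j+1} ∪ (Opt (F j) \ {F j + 1})`.
(The value when `j ≥ 1` but `F j ≥ j` is junk, never attained for F-sequences.) -/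
def Opt (F : ℕ → ℕ) (j : ℕ) : Finset ℕ :=
  if j = 0 then {0, 1}
  else if F j = 0 then insert (j + 1) ({0, 1} \ {F (j + 1)})
  else if h : F j < j then
    if F (j + 1) = F j + 1 then insert (j + 1) (Opt F (F j) \ {F j + 1})
    else insert (j + 1) (Opt F (F j))
  else ∅
termination_by j
decreasing_by all_goals exact h

/-- `F` is an *F-sequence of length `n`*: a function from `{0,…,n}` (encoded as a total
function on `ℕ`, only its values on `{0,…,n}` being constrained) with `F 0 = 0`,
`F 1 = 0` (when `n ≥ 1`), `F i < i` for `1 ≤ i ≤ n`, and `F (i+1) ∈ Opt F (F i)` for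
`1 ≤ i < n`. -/
def IsFSeq (n : ℕ) (F : ℕ → ℕ) : Prop :=
  F 0 = 0 ∧ (1 ≤ n → F 1 = 0) ∧ (∀ i, 1 ≤ i → i ≤ n → F i < i) ∧
    ∀ i, 1 ≤ i → i < n → F (i + 1) ∈ Opt F (F i)

/-- `kappa F i` is the least `k ≥ 0` with `F^[k] i = 0`. -/
noncomputable def kappa (F : ℕ → ℕ) (i : ℕ) : ℕ := sInf {k | F^[k] i = 0}

/-- `idx F n k` is the least index `i ≤ n` with `kappa F i = k` (when one exists). -/
noncomputable def idx (F : ℕ → ℕ) (n k : ℕ) : ℕ := sInf {i | i ≤ n ∧ kappa F i = k}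

/-!
Let `W ℓ = maxKappa F ℓ` be the largest value of `kappa F` on `0, …, ℓ`. Every option of
`F ℓ` is `0` or of the form `F^[t] (F ℓ) + 1`, so `F (ℓ + 1)` is `0` or `m + 1` with
`m ≤ F ℓ`. In particular `F (ℓ + 1) ≤ F ℓ + 1`, and induction on `ℓ` gives the invariant `W (F ℓ) < W ℓ`.

If `a = i_k`, then `kappa F (F a) = k - 1` gives `i_{k-1} ≤ F a`. Conversely every index below
`F a` is at most `F (a - 1)`, and `W (F (a - 1)) < W (a - 1) ≤ k - 1`; so `i_{k-1} ≥ F a`.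
Finally `F (i_{k+1}) = i_k`, `F (i_k) = i_{k-1}` and the slope bound `F j ≤ F i + (j - i)`
between `i_k` and `i_{k+1}` give `i_k - i_{k-1} ≤ i_{k+1} - i_k`.
-/

theorem eq_zero_or_eq_iterate_add_one_of_mem_Opt {F : ℕ → ℕ} {j x : ℕ} (hx : x ∈ Opt F j) :
    x = 0 ∨ ∃ t, x = F^[t] j + 1 := by
  induction j using Nat.strong_induction_on with
  | _ j ih =>
    have shift : ∀ {y}, (y = 0 ∨ ∃ t, y = F^[t] (F j) + 1) → y = 0 ∨ ∃ t, y = F^[t] j + 1 :=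
      fun h => h.imp_right fun ⟨t, ht⟩ => ⟨t + 1, ht⟩
    rw [Opt] at hx
    split_ifs at hx with h0 h1 h2 h3
    · subst h0
      simp only [Finset.mem_insert, Finset.mem_singleton] at hx
      exact hx.imp_right fun h => ⟨0, h⟩
    · simp only [Finset.mem_insert, Finset.mem_sdiff, Finset.mem_singleton] at hx
      rcases hx with h | ⟨h | h, -⟩
      · exact Or.inr ⟨0, h⟩
      · exact Or.inl h
      · exact Or.inr ⟨1, by simp [h, h1]⟩
    · rcases Finset.mem_insert.mp hx with h | h
      · exact Or.inr ⟨0, h⟩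
      · exact shift (ih _ h2 (Finset.mem_sdiff.mp h).1)
    · rcases Finset.mem_insert.mp hx with h | h
      · exact Or.inr ⟨0, h⟩
      · exact shift (ih _ h2 h)
    · simp at hx

theorem kappa_eq_kappa_apply_add_one {F : ℕ → ℕ} {i : ℕ} (hi : i ≠ 0)
    (hfin : ∃ k, F^[k] i = 0) : kappa F i = kappa F (F i) + 1 := by
  have hpos : 1 ≤ kappa F i := by
    by_contra! h
    rcases Nat.sInf_eq_zero.mp (Nat.lt_one_iff.mp h) with h | h
    · exact hi h
    · exact Set.eq_empty_iff_forall_notMem.mp h _ hfin.choose_spec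
  exact (Nat.sInf_add hpos).symm

theorem kappa_zero (F : ℕ → ℕ) : kappa F 0 = 0 :=
  Nat.sInf_eq_zero.mpr (Or.inl rfl)

theorem idx_spec {F : ℕ → ℕ} {n k : ℕ} (hex : ∃ i ≤ n, kappa F i = k) :
    idx F n k ≤ n ∧ kappa F (idx F n k) = k :=
  Nat.sInf_mem hex

theorem idx_ne_zero {F : ℕ → ℕ} {n k : ℕ} (hk : 1 ≤ k) (hex : ∃ i ≤ n, kappa F i = k) :
    idx F n k ≠ 0 := by
  intro h
  have := (idx_spec hex).2
  rw [h, kappa_zero] at this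
  omega

noncomputable def maxKappa (F : ℕ → ℕ) (ℓ : ℕ) : ℕ := (Finset.range (ℓ + 1)).sup (kappa F)

theorem kappa_le_maxKappa {F : ℕ → ℕ} {j ℓ : ℕ} (h : j ≤ ℓ) : kappa F j ≤ maxKappa F ℓ :=
  Finset.le_sup (Finset.mem_range.mpr (Nat.lt_succ_of_le h))

theorem maxKappa_mono (F : ℕ → ℕ) : Monotone (maxKappa F) := fun _ _ h =>
  Finset.sup_mono (Finset.range_subset_range.mpr (Nat.succ_le_succ h))

theorem maxKappa_zero (F : ℕ → ℕ) : maxKappa F 0 = 0 := by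
  simp [maxKappa, kappa_zero]

theorem maxKappa_succ (F : ℕ → ℕ) (ℓ : ℕ) :
    maxKappa F (ℓ + 1) = max (maxKappa F ℓ) (kappa F (ℓ + 1)) := by
  rw [maxKappa, Finset.range_add_one, Finset.sup_insert, max_comm]
  rfl

namespace IsFSeq

variable {n : ℕ} {F : ℕ → ℕ}

theorem apply_one (hF : IsFSeq n F) (hn : 1 ≤ n) : F 1 = 0 := hF.2.1 hn

theorem apply_lt (hF : IsFSeq n F) {i : ℕ} (h1 : 1 ≤ i) (hi : i ≤ n) : F i < i := hF.2.2.1 i h1 hi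

theorem apply_succ_mem_Opt (hF : IsFSeq n F) {i : ℕ} (h1 : 1 ≤ i) (hi : i < n) :
    F (i + 1) ∈ Opt F (F i) :=
  hF.2.2.2 i h1 hi

theorem apply_le (hF : IsFSeq n F) {i : ℕ} (hi : i ≤ n) : F i ≤ i := by
  rcases Nat.eq_zero_or_pos i with rfl | hpos
  · exact hF.1.le
  · exact (hF.apply_lt hpos hi).le

theorem iterate_le (hF : IsFSeq n F) {i : ℕ} (hi : i ≤ n) (t : ℕ) : F^[t] i ≤ i := by
  induction t with
  | zero => rfl
  | succ t ih =>
    rw [Function.iterate_succ_apply']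
    exact (hF.apply_le (ih.trans hi)).trans ih

theorem exists_iterate_eq_zero (hF : IsFSeq n F) {i : ℕ} (hi : i ≤ n) : ∃ k, F^[k] i = 0 := by
  induction i using Nat.strong_induction_on with
  | _ i ih =>
    rcases Nat.eq_zero_or_pos i with rfl | hpos
    · exact ⟨0, rfl⟩
    · have hlt := hF.apply_lt hpos hi
      obtain ⟨k, hk⟩ := ih (F i) hlt (hlt.le.trans hi)
      exact ⟨k + 1, hk⟩

theorem kappa_eq_kappa_apply_add_one (hF : IsFSeq n F) {i : ℕ} (h0 : i ≠ 0) (hi : i ≤ n) :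
    kappa F i = kappa F (F i) + 1 :=
  _root_.kappa_eq_kappa_apply_add_one h0 (hF.exists_iterate_eq_zero hi)

theorem apply_succ_eq_zero_or_exists_le (hF : IsFSeq n F) {ℓ : ℕ} (hℓ : ℓ < n) :
    F (ℓ + 1) = 0 ∨ ∃ m ≤ F ℓ, F (ℓ + 1) = m + 1 := by
  rcases Nat.eq_zero_or_pos ℓ with rfl | hpos
  · exact Or.inl (hF.apply_one hℓ)
  · have hFℓ : F ℓ ≤ n := (hF.apply_le hℓ.le).trans hℓ.le
    exact (eq_zero_or_eq_iterate_add_one_of_mem_Opt (hF.apply_succ_mem_Opt hpos hℓ)).imp_right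
      fun ⟨t, ht⟩ => ⟨_, hF.iterate_le hFℓ t, ht⟩

theorem apply_le_apply_add (hF : IsFSeq n F) {i j : ℕ} (hij : i ≤ j) (hj : j ≤ n) :
    F j ≤ F i + (j - i) := by
  induction j, hij using Nat.le_induction with
  | base => omega
  | succ j hij ih =>
    have hstep : F (j + 1) ≤ F j + 1 := by
      rcases hF.apply_succ_eq_zero_or_exists_le hj with h | ⟨m, hm, h⟩ <;> omega
    have := ih (by omega)
    omega

theorem maxKappa_apply_lt (hF : IsFSeq n F) {ℓ : ℕ} (h1 : 1 ≤ ℓ) (hℓ : ℓ ≤ n) :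
    maxKappa F (F ℓ) < maxKappa F ℓ := by
  induction ℓ, h1 using Nat.le_induction with
  | base =>
    have hκ : kappa F 1 = 1 := by
      rw [hF.kappa_eq_kappa_apply_add_one one_ne_zero hℓ, hF.apply_one hℓ, kappa_zero]
    have := kappa_le_maxKappa (F := F) (le_refl 1)
    rw [hF.apply_one hℓ, maxKappa_zero]
    omega
  | succ ℓ h1 ih =>
    have hκ := hF.kappa_eq_kappa_apply_add_one ℓ.add_one_ne_zero hℓ
    have hκle : kappa F (ℓ + 1) ≤ maxKappa F (ℓ + 1) := kappa_le_maxKappa le_rfl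
    rcases hF.apply_succ_eq_zero_or_exists_le hℓ with h | ⟨m, hm, h⟩
    · rw [h, maxKappa_zero]
      omega
    · have hprefix : maxKappa F m < maxKappa F (ℓ + 1) :=
        calc maxKappa F m ≤ maxKappa F (F ℓ) := maxKappa_mono F hm
          _ < maxKappa F ℓ := ih (by omega)
          _ ≤ maxKappa F (ℓ + 1) := maxKappa_mono F ℓ.le_succ
      rw [h, maxKappa_succ, ← h]
      exact max_lt hprefix (by omega)

theorem maxKappa_lt_of_forall_kappa_ne (hF : IsFSeq n F) {j k : ℕ} (hk : 1 ≤ k) (hj : j ≤ n)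
    (hne : ∀ i ≤ j, kappa F i ≠ k) : maxKappa F j < k := by
  induction j with
  | zero => rw [maxKappa_zero]; omega
  | succ j ih =>
    have hprev := ih (by omega) fun i hi => hne i (by omega)
    have hκ : kappa F (j + 1) ≤ maxKappa F j + 1 := by
      rw [hF.kappa_eq_kappa_apply_add_one j.add_one_ne_zero hj]
      exact Nat.succ_le_succ (kappa_le_maxKappa (hF.apply_lt (by omega) hj).le_pred)
    rw [maxKappa_succ]
    exact max_lt hprev (lt_of_le_of_ne (by omega) (hne _ le_rfl))

theorem apply_idx (hF : IsFSeq n F) {k : ℕ} (hk : 1 ≤ k) (hex : ∃ i ≤ n, kappa F i = k) :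
    F (idx F n k) = idx F n (k - 1) := by
  set a := idx F n k
  obtain ⟨ha, hka⟩ := idx_spec hex
  have ha0 : a ≠ 0 := idx_ne_zero hk hex
  have hFa : kappa F (F a) = k - 1 := by
    rw [hF.kappa_eq_kappa_apply_add_one ha0 ha] at hka
    omega
  have hFan : F a ≤ n := (hF.apply_le ha).trans ha
  refine le_antisymm ?_ (Nat.sInf_le ⟨hFan, hFa⟩)
  by_contra! hlt
  set b := idx F n (k - 1)
  have hkb : kappa F b = k - 1 := (idx_spec ⟨F a, hFan, hFa⟩).2
  have ha1 : 1 ≤ a - 1 := by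
    by_contra h
    rw [show a = 1 by omega, hF.apply_one (by omega)] at hlt
    omega
  have hb : b ≤ F (a - 1) := by
    have := hF.apply_le_apply_add (Nat.sub_le a 1) ha
    omega
  have hbefore : maxKappa F (a - 1) < k :=
    hF.maxKappa_lt_of_forall_kappa_ne hk (by omega) fun i hi hki =>
      Nat.notMem_of_lt_sInf (show i < a by omega) ⟨by omega, hki⟩
  have := (kappa_le_maxKappa hb).trans_lt (hF.maxKappa_apply_lt ha1 (by omega))
  omega

end IsFSeq

/-- Let `F` be an F-sequence of length `n`. For `0 ≤ i ≤ n` let `κ i` be the least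
`k ≥ 0` with `F^[k] i = 0`, and let `i_k` be the least index `i ≤ n` with `κ i = k`,
when one exists. Then for every `k ≥ 1` such that `i_k` exists, `i_{k−1}` exists and
`F (i_k) = i_{k−1}`; consequently, whenever `i_{k+1}` also exists,
`i_{k+1} − i_k ≥ i_k − i_{k−1}`. -/
theorem increments_grow (n : ℕ) (F : ℕ → ℕ) (hF : IsFSeq n F)
    (k : ℕ) (hk : 1 ≤ k) (hex : ∃ i ≤ n, kappa F i = k) :
    (∃ i ≤ n, kappa F i = k - 1) ∧
    F (idx F n k) = idx F n (k - 1) ∧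
    ((∃ i ≤ n, kappa F i = k + 1) →
      (idx F n k : ℤ) - idx F n (k - 1) ≤ (idx F n (k + 1) : ℤ) - idx F n k) := by
  obtain ⟨ha, hka⟩ := idx_spec hex
  have hκ := hF.kappa_eq_kappa_apply_add_one (idx_ne_zero hk hex) ha
  refine ⟨⟨F (idx F n k), (hF.apply_le ha).trans ha, by omega⟩,
    hF.apply_idx hk hex, fun hex' => ?_⟩
  have hc := (idx_spec hex').1
  have hFc : F (idx F n (k + 1)) = idx F n k := hF.apply_idx (by omega) hex'
  have hac : idx F n k < idx F n (k + 1) :=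
    hFc ▸ hF.apply_lt (Nat.one_le_iff_ne_zero.mpr (idx_ne_zero (by omega) hex')) hc
  have := hF.apply_le_apply_add hac.le hc
  rw [hFc, hF.apply_idx hk hex] at this
  omega
end

section
/- Let F be an F-sequence of length n and let 1 ≤ i < n be an index with F(i+1) ≠ F(i)+1 (i.e. i ∈ B). Then F(i+1) ≤ F(i), and there exists k ≥ 1 such that the iterate b := F^k(i) satisfies b ∈ B (i.e. b = 0 or F(b+1) ≠ F(b)+1) and F(i+1) ∈ P(b), where P(b) := Opt(b) \ {b+1} is the set of prior options of b. -/
/-- The *prior options* of `j`: the options of `j` other than `j + 1`. -/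
def priorOptions (F : ℕ → ℕ) (j : ℕ) : Finset ℕ := Opt F j \ {j + 1}

/-- The set `B` for an F-sequence of length `n`: `0` together with the indices
`1 ≤ i < n` such that `F (i+1) ≠ F i + 1`. -/
def Bset (n : ℕ) (F : ℕ → ℕ) : Set ℕ :=
  {0} ∪ {i | 1 ≤ i ∧ i < n ∧ F (i + 1) ≠ F i + 1}

lemma Opt_zero (F : ℕ → ℕ) : Opt F 0 = {0, 1} := by rw [Opt]; simp

lemma Opt_F0 (F : ℕ → ℕ) {j : ℕ} (hj : j ≠ 0) (h0 : F j = 0) :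
    Opt F j = insert (j + 1) ({0, 1} \ {F (j + 1)}) := by rw [Opt]; simp [hj, h0]

lemma Opt_pos_eq (F : ℕ → ℕ) {j : ℕ} (hj : j ≠ 0) (h0 : F j ≠ 0) (hlt : F j < j)
    (he : F (j + 1) = F j + 1) :
    Opt F j = insert (j + 1) (Opt F (F j) \ {F j + 1}) := by rw [Opt]; simp [hj, h0, hlt, he]

lemma Opt_pos_ne (F : ℕ → ℕ) {j : ℕ} (hj : j ≠ 0) (h0 : F j ≠ 0) (hlt : F j < j)
    (he : F (j + 1) ≠ F j + 1) :
    Opt F j = insert (j + 1) (Opt F (F j)) := by rw [Opt]; simp [hj, h0, hlt, he]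

lemma prior_le (F : ℕ → ℕ) :
    ∀ j, (∀ m, 1 ≤ m → m ≤ j → F m < m) → ∀ x ∈ Opt F j, x ≠ j + 1 → x ≤ j := by
  intro j
  induction j using Nat.strong_induction_on with
  | _ j ih =>
    intro hlt x hx hxne
    rcases Nat.eq_zero_or_pos j with hj | hj
    · subst hj
      rw [Opt_zero] at hx
      simp at hx
      rcases hx with h | h <;> omega
    · have hj0 : j ≠ 0 := by omega
      rcases Nat.eq_zero_or_pos (F j) with h0 | h0
      · rw [Opt_F0 F hj0 h0] at hx
        simp at hx
        rcases hx with h | ⟨⟨h | h, _⟩⟩ <;> omega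
      · have hFlt : F j < j := hlt j (by omega) le_rfl
        have hx' : x ∈ Opt F (F j) ∨ x = F j + 1 := by
          by_cases he : F (j + 1) = F j + 1
          · rw [Opt_pos_eq F hj0 (by omega) hFlt he] at hx
            simp at hx
            rcases hx with h | ⟨h, _⟩
            · omega
            · exact Or.inl h
          · rw [Opt_pos_ne F hj0 (by omega) hFlt he] at hx
            simp at hx
            rcases hx with h | h
            · omega
            · exact Or.inl h
        rcases hx' with h | h
        · by_cases hxe : x = F j + 1
          · omega
          · have := ih (F j) hFlt (fun m hm1 hm2 => hlt m hm1 (by omega)) x h hxe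
            omega
        · omega

lemma descent (n : ℕ) (F : ℕ → ℕ) (hlt : ∀ m, 1 ≤ m → m ≤ n → F m < m) :
    ∀ j, j < n → ∀ x, x ∈ Opt F j → x ≠ j + 1 →
      ∃ k, F^[k] j ∈ Bset n F ∧ x ∈ priorOptions F (F^[k] j) := by
  intro j
  induction j using Nat.strong_induction_on with
  | _ j ih =>
    intro hjn x hx hxne
    rcases Nat.eq_zero_or_pos j with hj | hj
    · subst hj
      refine ⟨0, Or.inl rfl, ?_⟩
      simp [priorOptions, hx, hxne]
    · have hj0 : j ≠ 0 := by omega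
      have hFlt : F j < j := hlt j (by omega) (by omega)
      rcases Nat.eq_zero_or_pos (F j) with h0 | h0
      · by_cases he : F (j + 1) = F j + 1
        · -- j ∉ B, recurse to F j = 0
          rw [Opt_F0 F hj0 h0] at hx
          simp at hx
          rcases hx with h | ⟨⟨h | h, hne⟩⟩
          · omega
          · refine ⟨1, ?_, ?_⟩
            · simp [Function.iterate_one, h0, Bset]
            · simp [Function.iterate_one, h0, priorOptions, Opt_zero, h]
          · exfalso; rw [he, h0] at hne; omega
        · refine ⟨0, ?_, ?_⟩ <;> simp only [Function.iterate_zero, id_eq]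
          · exact Or.inr ⟨by omega, hjn, he⟩
          · simp [priorOptions, hx, hxne]
      · by_cases he : F (j + 1) = F j + 1
        · rw [Opt_pos_eq F hj0 (by omega) hFlt he] at hx
          simp at hx
          rcases hx with h | ⟨h, hne⟩
          · omega
          · obtain ⟨k, hb, hp⟩ := ih (F j) hFlt (by omega) x h (by omega)
            exact ⟨k + 1, by rwa [Function.iterate_succ_apply], by rwa [Function.iterate_succ_apply]⟩
        · refine ⟨0, ?_, ?_⟩ <;> simp only [Function.iterate_zero, id_eq]
          · exact Or.inr ⟨by omega, hjn, he⟩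
          · simp [priorOptions, hx, hxne]

/-- Let `F` be an F-sequence of length `n` and let `1 ≤ i < n` be an index with
`F (i+1) ≠ F i + 1` (i.e. `i ∈ B`). Then `F (i+1) ≤ F i`, and there exists `k ≥ 1`
such that `b := F^[k] i` satisfies `b ∈ B` and `F (i+1) ∈ P b`, the set of prior
options of `b`. -/
theorem backslide (n : ℕ) (F : ℕ → ℕ) (hF : IsFSeq n F)
    (i : ℕ) (h1 : 1 ≤ i) (h2 : i < n) (hB : F (i + 1) ≠ F i + 1) :
    F (i + 1) ≤ F i ∧
    ∃ k, 1 ≤ k ∧ F^[k] i ∈ Bset n F ∧ F (i + 1) ∈ priorOptions F (F^[k] i) := by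
  obtain ⟨hF0, hF1, hlt, hopt⟩ := hF
  have hx : F (i + 1) ∈ Opt F (F i) := hopt i h1 h2
  have hFi : F i < i := hlt i h1 (by omega)
  have hle : F (i + 1) ≤ F i :=
    prior_le F (F i) (fun m hm1 hm2 => hlt m hm1 (by omega)) _ hx hB
  refine ⟨hle, ?_⟩
  obtain ⟨k, hb, hp⟩ := descent n F hlt (F i) (by omega) (F (i + 1)) hx hB
  exact ⟨k + 1, by omega, by rwa [Function.iterate_succ_apply], by rwa [Function.iterate_succ_apply]⟩
end

section
/- Let F be an F-sequence of length n which is not of maximal type: let k be the least index with 1 ≤ k < n and F(k+1) ≠ F(k)+1 (assumed to exist). Then F(i) = i−1 for all 1 ≤ i ≤ k, F(k+1) = 0, and for every j ≥ 1 such that i_{k+j} exists, i_{k+j} ≥ k + j·(k+1). Here, for 0 ≤ i ≤ n, κ(i) is the least m ≥ 0 with F^m(i) = 0, and i_r denotes the least index i ≤ n with κ(i) = r, when one exists. -/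
lemma mem_Opt_le (F : ℕ → ℕ) : ∀ m, ∀ x ∈ Opt F m, x ≤ m + 1 := by
  intro m
  induction m using Nat.strong_induction_on with
  | _ m ih =>
    intro x hx
    rw [Opt] at hx
    split_ifs at hx with h0 h1 h2 h3
    · subst h0; simp at hx; omega
    · simp at hx; rcases hx with h | ⟨h, _⟩ <;> omega
    · simp at hx
      rcases hx with h | ⟨h, _⟩
      · omega
      · have := ih (F m) h2 x h; omega
    · simp at hx
      rcases hx with h | h
      · omega
      · have := ih (F m) h2 x h; omega
    · simp at hx

lemma iterate_fix (F : ℕ → ℕ) (h0 : F 0 = 0) : ∀ m, F^[m] 0 = 0 := by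
  intro m; induction m with
  | zero => rfl
  | succ m ih => rw [Function.iterate_succ_apply, h0]; exact ih

lemma iter_self (n : ℕ) (F : ℕ → ℕ) (h0 : F 0 = 0)
    (hlt : ∀ i, 1 ≤ i → i ≤ n → F i < i) :
    ∀ i, i ≤ n → F^[i] i = 0 := by
  intro i
  induction i using Nat.strong_induction_on with
  | _ i ih =>
    intro hin
    rcases Nat.eq_zero_or_pos i with h | h
    · subst h; rfl
    · have hF : F i < i := hlt i h hin
      have h1 : F^[F i] (F i) = 0 := ih (F i) hF (by omega)
      have h2 : F^[i] i = F^[i-1] (F i) := by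
        conv_lhs => rw [show i = (i-1)+1 by omega]
        rw [Function.iterate_succ_apply, show i - 1 + 1 = i by omega]
      rw [h2, show i - 1 = (i - 1 - F i) + F i by omega,
        Function.iterate_add_apply, h1, iterate_fix F h0]

lemma kappa_le (n : ℕ) (F : ℕ → ℕ) (h0 : F 0 = 0)
    (hlt : ∀ i, 1 ≤ i → i ≤ n → F i < i) (i : ℕ) (hin : i ≤ n) :
    kappa F i ≤ i :=
  Nat.sInf_le (iter_self n F h0 hlt i hin)

lemma kappa_succ (n : ℕ) (F : ℕ → ℕ) (h0 : F 0 = 0)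
    (hlt : ∀ i, 1 ≤ i → i ≤ n → F i < i) (i : ℕ) (hi : 1 ≤ i) (hin : i ≤ n) :
    kappa F i = kappa F (F i) + 1 := by
  have hFn : F i ≤ n := le_trans (le_of_lt (hlt i hi hin)) hin
  have hne' : {m | F^[m] (F i) = 0}.Nonempty := ⟨F i, iter_self n F h0 hlt (F i) hFn⟩
  have ht : F^[kappa F (F i)] (F i) = 0 := Nat.sInf_mem hne'
  have h1 : kappa F i ≤ kappa F (F i) + 1 := Nat.sInf_le (by
    show F^[kappa F (F i) + 1] i = 0
    rw [Function.iterate_succ_apply]; exact ht)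
  have hne : {m | F^[m] i = 0}.Nonempty := ⟨i, iter_self n F h0 hlt i hin⟩
  have hs : F^[kappa F i] i = 0 := Nat.sInf_mem hne
  have hs0 : kappa F i ≠ 0 := by
    intro h; rw [h] at hs; simp at hs; omega
  have h2 : kappa F (F i) ≤ kappa F i - 1 := Nat.sInf_le (by
    show F^[kappa F i - 1] (F i) = 0
    have heq : F^[kappa F i] i = F^[kappa F i - 1] (F i) := by
      conv_lhs => rw [show kappa F i = (kappa F i - 1) + 1 by omega]
      rw [Function.iterate_succ_apply]
    rw [← heq]; exact hs)
  omega


/-- Let `F` be an F-sequence of length `n` which is not of maximal type, and let `k` be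
the least index with `1 ≤ k < n` and `F (k+1) ≠ F k + 1`. Then `F i = i − 1` for all
`1 ≤ i ≤ k`, `F (k+1) = 0`, and for every `j ≥ 1` such that `i_{k+j}` exists,
`i_{k+j} ≥ k + j·(k+1)`. Here `κ i` is the least `m ≥ 0` with `F^[m] i = 0` and `i_r`
is the least index `i ≤ n` with `κ i = r`, when one exists. -/
theorem gap_growth (n : ℕ) (F : ℕ → ℕ) (hF : IsFSeq n F)
    (k : ℕ) (hk1 : 1 ≤ k) (hkn : k < n) (hkB : F (k + 1) ≠ F k + 1)
    (hmin : ∀ j, 1 ≤ j → j < k → F (j + 1) = F j + 1) :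
    (∀ i, 1 ≤ i → i ≤ k → F i = i - 1) ∧
    F (k + 1) = 0 ∧
    (∀ j, 1 ≤ j → (∃ i ≤ n, kappa F i = k + j) →
      k + j * (k + 1) ≤ idx F n (k + j)) := by
  obtain ⟨h0, h1n, hlt, hopt⟩ := hF
  -- Part 1
  have h1 : ∀ i, 1 ≤ i → i ≤ k → F i = i - 1 := by
    intro i
    induction i with
    | zero => omega
    | succ j ih =>
      intro _ hik
      rcases Nat.eq_zero_or_pos j with hj | hj
      · subst hj; simpa using h1n (by omega)
      · have := hmin j hj (by omega)
        have := ih hj (by omega)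
        omega
  -- Opt chain
  have hchain : ∀ j, 1 ≤ j → j ≤ k - 1 → Opt F j = {j + 1, 0} := by
    intro j
    induction j with
    | zero => omega
    | succ m ih =>
      intro _ hle
      rcases Nat.eq_zero_or_pos m with hm | hm
      · subst hm
        have hF1 : F 1 = 0 := h1n (by omega)
        have hF2 : F (1 + 1) = 1 := by have := h1 (1 + 1) (by omega) (by omega); omega
        show Opt F 1 = _
        rw [Opt, if_neg one_ne_zero, if_pos hF1, hF2]
        ext x; simp
      · have hFm1 : F (m + 1) = m := by
          have := h1 (m + 1) (by omega) (by omega); omega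
        have hFm2 : F (m + 1 + 1) = m + 1 := by
          have := h1 (m + 1 + 1) (by omega) (by omega); omega
        rw [Opt]
        rw [if_neg (by omega), if_neg (by omega : ¬ F (m+1) = 0)]
        · rw [dif_pos (by omega : F (m+1) < m + 1)]
          rw [if_pos (by omega : F (m + 1 + 1) = F (m+1) + 1)]
          rw [show F (m + 1) = m from hFm1, ih hm (by omega)]
          ext x; simp; omega
  -- Part 2
  have h2 : F (k + 1) = 0 := by
    have hmem : F (k + 1) ∈ Opt F (F k) := hopt k hk1 hkn
    rcases Nat.eq_or_lt_of_le hk1 with hk | hk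
    · have hFk : F k = 0 := by rw [← hk]; exact h1n (by omega)
      rw [hFk, Opt] at hmem
      simp at hmem
      rw [hFk] at hkB
      omega
    · have hFk : F k = k - 1 := h1 k hk1 le_rfl
      rw [hFk, hchain (k - 1) (by omega) le_rfl] at hmem
      simp at hmem
      rcases hmem with h | h
      · exfalso; apply hkB; omega
      · exact h
  -- gap lemma
  have hgap : ∀ i, k + 1 ≤ i → i ≤ n → F i + (k + 1) ≤ i := by
    intro i hik
    induction i, hik using Nat.le_induction with
    | base => intro _; omega
    | succ i hik ih =>
      intro hin
      have hstep : F (i + 1) ≤ F i + 1 :=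
        mem_Opt_le F (F i) _ (hopt i (by omega) (by omega))
      have := ih (by omega)
      omega
  -- main growth claim
  have hmain : ∀ j i, i ≤ n → k + j ≤ kappa F i → k + j * (k + 1) ≤ i := by
    intro j
    induction j with
    | zero =>
      intro i hin hki
      have := kappa_le n F h0 hlt i hin
      omega
    | succ j ih =>
      intro i hin hki
      have hle := kappa_le n F h0 hlt i hin
      have hi1 : 1 ≤ i := by omega
      have hik : k + 1 ≤ i := by omega
      have hks : kappa F i = kappa F (F i) + 1 := kappa_succ n F h0 hlt i hi1 hin
      have hFlt : F i < i := hlt i hi1 hin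
      have hIH : k + j * (k + 1) ≤ F i := ih (F i) (by omega) (by omega)
      have hg : F i + (k + 1) ≤ i := hgap i hik hin
      have e : k + (j + 1) * (k + 1) = (k + j * (k + 1)) + (k + 1) := by ring
      omega
  refine ⟨h1, h2, ?_⟩
  intro j _ hex
  obtain ⟨i, hin, hki⟩ := hex
  have hne : {i | i ≤ n ∧ kappa F i = k + j}.Nonempty := ⟨i, hin, hki⟩
  have hmem : idx F n (k + j) ∈ {i | i ≤ n ∧ kappa F i = k + j} := Nat.sInf_mem hne
  exact hmain j (idx F n (k + j)) hmem.1 (le_of_eq hmem.2.symm)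
end
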